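/- The induced map Δ_L : B → H⊗B defined by Δ_L(b) = d(b_(1))(b_(2))^(1) ⊗ (b_(2))^(2) is a coassociative counital left H-coaction on B: (Δ_H ⊗ id)Δ_L = (id ⊗ Δ_L)Δ_L and (ε ⊗ id)Δ_L = id_B. (Lemma 3.2(i).) -/
import Mathlib


open TensorProduct

noncomputable section

variable (k H B : Type*) [Field k] [Ring H] [HopfAlgebra k H]
  [AddCommGroup B] [Module k B] [Coalgebra k B]

/-- The coaction on `B` induced by `d`: `Δ_L(b) = d(b₁)(b₂)⁽¹⁾ ⊗ (b₂)⁽²⁾`. -/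
def DLind (δ : B →ₗ[k] H ⊗[k] B) (d : B →ₗ[k] H) : B →ₗ[k] H ⊗[k] B :=
  map (LinearMap.mul' k H) LinearMap.id
    ∘ₗ (TensorProduct.assoc k H H B).symm.toLinearMap
    ∘ₗ map d δ
    ∘ₗ (Coalgebra.comul : B →ₗ[k] B ⊗[k] B)

set_option linter.unusedSectionVars false

/-- `P` of the proof: `u ⊗ v ↦ d(u)v⁽¹⁾ ⊗ d(v⁽²⁾)`. -/
def auxP (δ : B →ₗ[k] H ⊗[k] B) (d : B →ₗ[k] H) : B ⊗[k] B →ₗ[k] H ⊗[k] H :=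
  map (LinearMap.mul' k H) (LinearMap.id : H →ₗ[k] H)
    ∘ₗ (TensorProduct.assoc k H H H).symm.toLinearMap
    ∘ₗ map d (map (LinearMap.id : H →ₗ[k] H) d ∘ₗ δ)

/-- `C` of the proof: `w ↦ Δ_H(w⁽¹⁾) ⊗ w⁽²⁾`. -/
def auxC (δ : B →ₗ[k] H ⊗[k] B) : B →ₗ[k] (H ⊗[k] H) ⊗[k] B :=
  map (Coalgebra.comul : H →ₗ[k] H ⊗[k] H) (LinearMap.id : B →ₗ[k] B) ∘ₗ δ

/-- `V` of the proof. -/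
def auxV (δ : B →ₗ[k] H ⊗[k] B) : B →ₗ[k] H ⊗[k] (H ⊗[k] B) :=
  (TensorProduct.assoc k H H B).toLinearMap ∘ₗ auxC k H B δ

/-- `W` of the proof. -/
def auxW (d : B →ₗ[k] H) :
    (H ⊗[k] B) ⊗[k] (H ⊗[k] (H ⊗[k] B)) →ₗ[k] H ⊗[k] (H ⊗[k] B) :=
  map (LinearMap.id : H →ₗ[k] H)
      (map (LinearMap.mul' k H) (LinearMap.id : B →ₗ[k] B)
        ∘ₗ (TensorProduct.assoc k H H B).symm.toLinearMap)
    ∘ₗ map (LinearMap.mul' k H) (map d (LinearMap.id : H ⊗[k] B →ₗ[k] H ⊗[k] B))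
    ∘ₗ (tensorTensorTensorComm k H B H (H ⊗[k] B)).toLinearMap

/-- `S` of the proof: `u ⊗ v ↦ d(u)v⁽¹⁾ ⊗ v⁽²⁾`, so `DLind = S ∘ Δ`. -/
def auxS (δ : B →ₗ[k] H ⊗[k] B) (d : B →ₗ[k] H) : B ⊗[k] B →ₗ[k] H ⊗[k] B :=
  map (LinearMap.mul' k H) (LinearMap.id : B →ₗ[k] B)
    ∘ₗ (TensorProduct.assoc k H H B).symm.toLinearMap
    ∘ₗ map d δ

/-- `G_L` of the proof. -/
def auxGL (δ : B →ₗ[k] H ⊗[k] B) (d : B →ₗ[k] H) :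
    (B ⊗[k] B) ⊗[k] B →ₗ[k] H ⊗[k] (H ⊗[k] B) :=
  (TensorProduct.assoc k H H B).toLinearMap
    ∘ₗ map (LinearMap.mul' k (H ⊗[k] H)) (LinearMap.id : B →ₗ[k] B)
    ∘ₗ (TensorProduct.assoc k (H ⊗[k] H) (H ⊗[k] H) B).symm.toLinearMap
    ∘ₗ map (auxP k H B δ d) (auxC k H B δ)

/-- `G_R` of the proof. -/
def auxGR (δ : B →ₗ[k] H ⊗[k] B) (d : B →ₗ[k] H) :
    B ⊗[k] (B ⊗[k] B) →ₗ[k] H ⊗[k] (H ⊗[k] B) :=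
  map (LinearMap.mul' k H) (LinearMap.id : H ⊗[k] B →ₗ[k] H ⊗[k] B)
    ∘ₗ (TensorProduct.assoc k H H (H ⊗[k] B)).symm.toLinearMap
    ∘ₗ map d (auxW k H B d ∘ₗ map δ (auxV k H B δ))

lemma auxK1 : (TensorProduct.assoc k H H B).toLinearMap
      ∘ₗ map (Coalgebra.comul : H →ₗ[k] H ⊗[k] H) LinearMap.id
      ∘ₗ map (LinearMap.mul' k H) (LinearMap.id : B →ₗ[k] B)
      ∘ₗ (TensorProduct.assoc k H H B).symm.toLinearMap
    = (TensorProduct.assoc k H H B).toLinearMap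
      ∘ₗ map (LinearMap.mul' k (H ⊗[k] H)) (LinearMap.id : B →ₗ[k] B)
      ∘ₗ (TensorProduct.assoc k (H ⊗[k] H) (H ⊗[k] H) B).symm.toLinearMap
      ∘ₗ map (Coalgebra.comul : H →ₗ[k] H ⊗[k] H)
          (map (Coalgebra.comul : H →ₗ[k] H ⊗[k] H) (LinearMap.id : B →ₗ[k] B)) := by
  ext x y z
  simp

lemma auxKc1 : (TensorProduct.lid k B).toLinearMap
      ∘ₗ map (Coalgebra.counit : H →ₗ[k] k) LinearMap.id
      ∘ₗ map (LinearMap.mul' k H) (LinearMap.id : B →ₗ[k] B)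
      ∘ₗ (TensorProduct.assoc k H H B).symm.toLinearMap
    = (TensorProduct.lid k B).toLinearMap
      ∘ₗ map (Coalgebra.counit : H →ₗ[k] k)
          ((TensorProduct.lid k B).toLinearMap
            ∘ₗ map (Coalgebra.counit : H →ₗ[k] k) (LinearMap.id : B →ₗ[k] B)) := by
  ext x y z
  simp [smul_smul, mul_comm]

set_option maxHeartbeats 1000000 in
set_option synthInstance.maxHeartbeats 1000000 in
lemma auxKfinal (δ : B →ₗ[k] H ⊗[k] B) (d : B →ₗ[k] H) :
    auxGR k H B δ d ∘ₗ (TensorProduct.assoc k B B B).toLinearMap = auxGL k H B δ d := by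
  unfold auxGR auxGL auxW auxV auxC auxP
  ext u v w
  simp only [AlgebraTensorModule.curry_apply, TensorProduct.curry_apply,
    LinearMap.coe_restrictScalars, LinearMap.coe_comp, Function.comp_apply,
    LinearEquiv.coe_coe, assoc_tmul, map_tmul, LinearMap.id_coe, id_eq]
  generalize δ v = t
  generalize (map (Coalgebra.comul : H →ₗ[k] H ⊗[k] H) (LinearMap.id : B →ₗ[k] B)) (δ w) = s
  induction t with
  | zero => simp only [tmul_zero, zero_tmul, map_zero]
  | add a b ha hb => simp only [tmul_add, add_tmul, map_add, ha, hb]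
  | tmul p q =>
    induction s with
    | zero => simp only [tmul_zero, zero_tmul, map_zero]
    | add a b ha hb => simp only [tmul_add, add_tmul, map_add, ha, hb]
    | tmul g c =>
      induction g with
      | zero => simp only [tmul_zero, zero_tmul, map_zero]
      | add a b ha hb => simp only [tmul_add, add_tmul, map_add, ha, hb]
      | tmul g1 g2 =>
        simp only [map_tmul, LinearMap.id_coe, id_eq, LinearEquiv.coe_coe,
          tensorTensorTensorComm_tmul, assoc_tmul, assoc_symm_tmul,
          LinearMap.mul'_apply, Algebra.TensorProduct.tmul_mul_tmul, mul_assoc,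
          LinearMap.coe_comp, Function.comp_apply]

set_option maxHeartbeats 1000000 in
set_option synthInstance.maxHeartbeats 1000000 in
/-- Lemma 3.2(i): given a left `H`-coaction `δ` making the coalgebra `B` an `H`-comodule
coalgebra and a linear map `d : B → H` satisfying the twisted Hopf-map conditions
`Δ_H(d(b)) = d(b₁)(b₂)⁽¹⁾ ⊗ d((b₂)⁽²⁾)` and `ε∘d = ε`, the induced map
`Δ_L(b) = d(b₁)(b₂)⁽¹⁾ ⊗ (b₂)⁽²⁾` is a coassociative counital left `H`-coaction on `B`. -/
theorem statement18 (δ : B →ₗ[k] H ⊗[k] B) (d : B →ₗ[k] H)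
    -- `δ` is a coassociative left coaction
    (hδ_coassoc : (TensorProduct.assoc k H H B).toLinearMap
        ∘ₗ map (Coalgebra.comul : H →ₗ[k] H ⊗[k] H) LinearMap.id ∘ₗ δ
      = map LinearMap.id δ ∘ₗ δ)
    -- `δ` is counital
    (hδ_counit : (TensorProduct.lid k B).toLinearMap
        ∘ₗ map (Coalgebra.counit : H →ₗ[k] k) LinearMap.id ∘ₗ δ = LinearMap.id)
    -- comodule coalgebra: `b⁽¹⁾ ⊗ Δ(b⁽²⁾) = (b₁)⁽¹⁾(b₂)⁽¹⁾ ⊗ (b₁)⁽²⁾ ⊗ (b₂)⁽²⁾`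
    (hcomod_comul : map LinearMap.id (Coalgebra.comul : B →ₗ[k] B ⊗[k] B) ∘ₗ δ
      = map (LinearMap.mul' k H) LinearMap.id
          ∘ₗ (tensorTensorTensorComm k H B H B).toLinearMap
          ∘ₗ map δ δ ∘ₗ (Coalgebra.comul : B →ₗ[k] B ⊗[k] B))
    -- comodule coalgebra: `b⁽¹⁾ ε(b⁽²⁾) = ε(b)1`
    (hcomod_counit : (TensorProduct.rid k H).toLinearMap
        ∘ₗ map LinearMap.id (Coalgebra.counit : B →ₗ[k] k) ∘ₗ δ
      = Algebra.linearMap k H ∘ₗ (Coalgebra.counit : B →ₗ[k] k))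
    -- twisted Hopf-map condition: `Δ_H(d(b)) = d(b₁)(b₂)⁽¹⁾ ⊗ d((b₂)⁽²⁾)`
    (hd_comul : (Coalgebra.comul : H →ₗ[k] H ⊗[k] H) ∘ₗ d
      = map (LinearMap.mul' k H) LinearMap.id
          ∘ₗ (TensorProduct.assoc k H H H).symm.toLinearMap
          ∘ₗ map d (map LinearMap.id d ∘ₗ δ)
          ∘ₗ (Coalgebra.comul : B →ₗ[k] B ⊗[k] B))
    -- twisted Hopf-map condition: `ε(d(b)) = ε(b)`
    (hd_counit : (Coalgebra.counit : H →ₗ[k] k) ∘ₗ d = (Coalgebra.counit : B →ₗ[k] k)) :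
    (TensorProduct.assoc k H H B).toLinearMap
        ∘ₗ map (Coalgebra.comul : H →ₗ[k] H ⊗[k] H) LinearMap.id ∘ₗ DLind k H B δ d
      = map LinearMap.id (DLind k H B δ d) ∘ₗ DLind k H B δ d
    ∧ (TensorProduct.lid k B).toLinearMap
        ∘ₗ map (Coalgebra.counit : H →ₗ[k] k) LinearMap.id ∘ₗ DLind k H B δ d
      = LinearMap.id := by
  constructor
  · -- coassociativity
    -- Left side
    have hL : (TensorProduct.assoc k H H B).toLinearMap
        ∘ₗ map (Coalgebra.comul : H →ₗ[k] H ⊗[k] H) LinearMap.id ∘ₗ DLind k H B δ d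
        = auxGL k H B δ d
          ∘ₗ map (Coalgebra.comul : B →ₗ[k] B ⊗[k] B) (LinearMap.id : B →ₗ[k] B)
          ∘ₗ (Coalgebra.comul : B →ₗ[k] B ⊗[k] B) := by
      calc (TensorProduct.assoc k H H B).toLinearMap
          ∘ₗ map (Coalgebra.comul : H →ₗ[k] H ⊗[k] H) LinearMap.id ∘ₗ DLind k H B δ d
          = ((TensorProduct.assoc k H H B).toLinearMap
              ∘ₗ map (Coalgebra.comul : H →ₗ[k] H ⊗[k] H) LinearMap.id
              ∘ₗ map (LinearMap.mul' k H) (LinearMap.id : B →ₗ[k] B)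
              ∘ₗ (TensorProduct.assoc k H H B).symm.toLinearMap)
            ∘ₗ map d δ ∘ₗ (Coalgebra.comul : B →ₗ[k] B ⊗[k] B) := rfl
        _ = ((TensorProduct.assoc k H H B).toLinearMap
              ∘ₗ map (LinearMap.mul' k (H ⊗[k] H)) (LinearMap.id : B →ₗ[k] B)
              ∘ₗ (TensorProduct.assoc k (H ⊗[k] H) (H ⊗[k] H) B).symm.toLinearMap
              ∘ₗ map (Coalgebra.comul : H →ₗ[k] H ⊗[k] H)
                  (map (Coalgebra.comul : H →ₗ[k] H ⊗[k] H) (LinearMap.id : B →ₗ[k] B)))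
            ∘ₗ map d δ ∘ₗ (Coalgebra.comul : B →ₗ[k] B ⊗[k] B) := by rw [auxK1]
        _ = ((TensorProduct.assoc k H H B).toLinearMap
              ∘ₗ map (LinearMap.mul' k (H ⊗[k] H)) (LinearMap.id : B →ₗ[k] B)
              ∘ₗ (TensorProduct.assoc k (H ⊗[k] H) (H ⊗[k] H) B).symm.toLinearMap)
            ∘ₗ map ((Coalgebra.comul : H →ₗ[k] H ⊗[k] H) ∘ₗ d)
                (map (Coalgebra.comul : H →ₗ[k] H ⊗[k] H) (LinearMap.id : B →ₗ[k] B) ∘ₗ δ)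
            ∘ₗ (Coalgebra.comul : B →ₗ[k] B ⊗[k] B) := by rw [map_comp]; rfl
        _ = ((TensorProduct.assoc k H H B).toLinearMap
              ∘ₗ map (LinearMap.mul' k (H ⊗[k] H)) (LinearMap.id : B →ₗ[k] B)
              ∘ₗ (TensorProduct.assoc k (H ⊗[k] H) (H ⊗[k] H) B).symm.toLinearMap)
            ∘ₗ map (auxP k H B δ d ∘ₗ (Coalgebra.comul : B →ₗ[k] B ⊗[k] B)) (auxC k H B δ)
            ∘ₗ (Coalgebra.comul : B →ₗ[k] B ⊗[k] B) := by rw [hd_comul]; rfl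
        _ = ((TensorProduct.assoc k H H B).toLinearMap
              ∘ₗ map (LinearMap.mul' k (H ⊗[k] H)) (LinearMap.id : B →ₗ[k] B)
              ∘ₗ (TensorProduct.assoc k (H ⊗[k] H) (H ⊗[k] H) B).symm.toLinearMap)
            ∘ₗ (map (auxP k H B δ d) (auxC k H B δ)
              ∘ₗ map (Coalgebra.comul : B →ₗ[k] B ⊗[k] B) (LinearMap.id : B →ₗ[k] B))
            ∘ₗ (Coalgebra.comul : B →ₗ[k] B ⊗[k] B) := by
              rw [show map (auxP k H B δ d ∘ₗ (Coalgebra.comul : B →ₗ[k] B ⊗[k] B))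
                    (auxC k H B δ)
                  = map (auxP k H B δ d) (auxC k H B δ)
                    ∘ₗ map (Coalgebra.comul : B →ₗ[k] B ⊗[k] B) (LinearMap.id : B →ₗ[k] B)
                from by rw [← map_comp, LinearMap.comp_id]]
        _ = auxGL k H B δ d
            ∘ₗ map (Coalgebra.comul : B →ₗ[k] B ⊗[k] B) (LinearMap.id : B →ₗ[k] B)
            ∘ₗ (Coalgebra.comul : B →ₗ[k] B ⊗[k] B) := rfl
    -- Right side
    have hS1 : map (LinearMap.id : H →ₗ[k] H) (DLind k H B δ d)
          ∘ₗ map (LinearMap.mul' k H) (LinearMap.id : B →ₗ[k] B)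
          ∘ₗ (TensorProduct.assoc k H H B).symm.toLinearMap
        = map (LinearMap.mul' k H) (LinearMap.id : H ⊗[k] B →ₗ[k] H ⊗[k] B)
          ∘ₗ (TensorProduct.assoc k H H (H ⊗[k] B)).symm.toLinearMap
          ∘ₗ map (LinearMap.id : H →ₗ[k] H)
              (map (LinearMap.id : H →ₗ[k] H) (DLind k H B δ d)) := by
      ext x y b
      simp
    have hS2 : map (LinearMap.id : H →ₗ[k] H)
          (map (LinearMap.id : H →ₗ[k] H) (DLind k H B δ d)) ∘ₗ map d δ
        = map d (map (LinearMap.id : H →ₗ[k] H) (DLind k H B δ d) ∘ₗ δ) := by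
      rw [← map_comp, LinearMap.id_comp]
    have hS3 : map (LinearMap.id : H →ₗ[k] H) (DLind k H B δ d)
        = map (LinearMap.id : H →ₗ[k] H) (auxS k H B δ d)
          ∘ₗ map (LinearMap.id : H →ₗ[k] H) (Coalgebra.comul : B →ₗ[k] B ⊗[k] B) := by
      rw [← map_comp, LinearMap.id_comp]; rfl
    have hS4 : map (LinearMap.id : H →ₗ[k] H) (auxS k H B δ d)
          ∘ₗ map (LinearMap.mul' k H) (LinearMap.id : B ⊗[k] B →ₗ[k] B ⊗[k] B)
          ∘ₗ (tensorTensorTensorComm k H B H B).toLinearMap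
          ∘ₗ map δ δ
        = auxW k H B d ∘ₗ map δ (map (LinearMap.id : H →ₗ[k] H) δ ∘ₗ δ) := by
      unfold auxW auxS
      ext x y
      simp only [AlgebraTensorModule.curry_apply, TensorProduct.curry_apply,
        LinearMap.coe_restrictScalars, LinearMap.coe_comp, Function.comp_apply,
        map_tmul, LinearMap.id_coe, id_eq, LinearEquiv.coe_coe]
      generalize δ x = t
      generalize δ y = s
      induction t with
      | zero => simp only [tmul_zero, zero_tmul, map_zero]
      | add a b ha hb => simp only [tmul_add, add_tmul, map_add, ha, hb]
      | tmul p q =>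
        induction s with
        | zero => simp only [tmul_zero, zero_tmul, map_zero]
        | add a b ha hb => simp only [tmul_add, add_tmul, map_add, ha, hb]
        | tmul h c =>
          simp only [map_tmul, LinearMap.id_coe, id_eq, LinearEquiv.coe_coe,
            tensorTensorTensorComm_tmul, LinearMap.mul'_apply, LinearMap.coe_comp,
            Function.comp_apply]
    have hE : map (LinearMap.id : H →ₗ[k] H) (DLind k H B δ d) ∘ₗ δ
        = auxW k H B d ∘ₗ map δ (auxV k H B δ) ∘ₗ (Coalgebra.comul : B →ₗ[k] B ⊗[k] B) := by
      calc map (LinearMap.id : H →ₗ[k] H) (DLind k H B δ d) ∘ₗ δ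
          = map (LinearMap.id : H →ₗ[k] H) (auxS k H B δ d)
            ∘ₗ (map (LinearMap.id : H →ₗ[k] H) (Coalgebra.comul : B →ₗ[k] B ⊗[k] B)
              ∘ₗ δ) := by rw [hS3]; rfl
        _ = map (LinearMap.id : H →ₗ[k] H) (auxS k H B δ d)
            ∘ₗ map (LinearMap.mul' k H) LinearMap.id
            ∘ₗ (tensorTensorTensorComm k H B H B).toLinearMap
            ∘ₗ map δ δ ∘ₗ (Coalgebra.comul : B →ₗ[k] B ⊗[k] B) := by rw [hcomod_comul]
        _ = (map (LinearMap.id : H →ₗ[k] H) (auxS k H B δ d)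
              ∘ₗ map (LinearMap.mul' k H) LinearMap.id
              ∘ₗ (tensorTensorTensorComm k H B H B).toLinearMap
              ∘ₗ map δ δ) ∘ₗ (Coalgebra.comul : B →ₗ[k] B ⊗[k] B) := rfl
        _ = (auxW k H B d ∘ₗ map δ (map (LinearMap.id : H →ₗ[k] H) δ ∘ₗ δ))
            ∘ₗ (Coalgebra.comul : B →ₗ[k] B ⊗[k] B) := by rw [hS4]
        _ = (auxW k H B d ∘ₗ map δ (auxV k H B δ))
            ∘ₗ (Coalgebra.comul : B →ₗ[k] B ⊗[k] B) := by
              rw [← hδ_coassoc]; rfl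
        _ = auxW k H B d ∘ₗ map δ (auxV k H B δ)
            ∘ₗ (Coalgebra.comul : B →ₗ[k] B ⊗[k] B) := rfl
    have hR : map LinearMap.id (DLind k H B δ d) ∘ₗ DLind k H B δ d
        = auxGR k H B δ d
          ∘ₗ map (LinearMap.id : B →ₗ[k] B) (Coalgebra.comul : B →ₗ[k] B ⊗[k] B)
          ∘ₗ (Coalgebra.comul : B →ₗ[k] B ⊗[k] B) := by
      calc map LinearMap.id (DLind k H B δ d) ∘ₗ DLind k H B δ d
          = (map (LinearMap.id : H →ₗ[k] H) (DLind k H B δ d)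
              ∘ₗ map (LinearMap.mul' k H) (LinearMap.id : B →ₗ[k] B)
              ∘ₗ (TensorProduct.assoc k H H B).symm.toLinearMap)
            ∘ₗ map d δ ∘ₗ (Coalgebra.comul : B →ₗ[k] B ⊗[k] B) := rfl
        _ = (map (LinearMap.mul' k H) (LinearMap.id : H ⊗[k] B →ₗ[k] H ⊗[k] B)
              ∘ₗ (TensorProduct.assoc k H H (H ⊗[k] B)).symm.toLinearMap
              ∘ₗ map (LinearMap.id : H →ₗ[k] H)
                  (map (LinearMap.id : H →ₗ[k] H) (DLind k H B δ d)))
            ∘ₗ map d δ ∘ₗ (Coalgebra.comul : B →ₗ[k] B ⊗[k] B) := by rw [hS1]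
        _ = (map (LinearMap.mul' k H) (LinearMap.id : H ⊗[k] B →ₗ[k] H ⊗[k] B)
              ∘ₗ (TensorProduct.assoc k H H (H ⊗[k] B)).symm.toLinearMap)
            ∘ₗ (map (LinearMap.id : H →ₗ[k] H)
                  (map (LinearMap.id : H →ₗ[k] H) (DLind k H B δ d)) ∘ₗ map d δ)
            ∘ₗ (Coalgebra.comul : B →ₗ[k] B ⊗[k] B) := rfl
        _ = (map (LinearMap.mul' k H) (LinearMap.id : H ⊗[k] B →ₗ[k] H ⊗[k] B)
              ∘ₗ (TensorProduct.assoc k H H (H ⊗[k] B)).symm.toLinearMap)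
            ∘ₗ map d (map (LinearMap.id : H →ₗ[k] H) (DLind k H B δ d) ∘ₗ δ)
            ∘ₗ (Coalgebra.comul : B →ₗ[k] B ⊗[k] B) := by rw [hS2]
        _ = (map (LinearMap.mul' k H) (LinearMap.id : H ⊗[k] B →ₗ[k] H ⊗[k] B)
              ∘ₗ (TensorProduct.assoc k H H (H ⊗[k] B)).symm.toLinearMap)
            ∘ₗ map d ((auxW k H B d ∘ₗ map δ (auxV k H B δ))
                ∘ₗ (Coalgebra.comul : B →ₗ[k] B ⊗[k] B))
            ∘ₗ (Coalgebra.comul : B →ₗ[k] B ⊗[k] B) := by rw [hE]; rfl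
        _ = (map (LinearMap.mul' k H) (LinearMap.id : H ⊗[k] B →ₗ[k] H ⊗[k] B)
              ∘ₗ (TensorProduct.assoc k H H (H ⊗[k] B)).symm.toLinearMap)
            ∘ₗ (map d (auxW k H B d ∘ₗ map δ (auxV k H B δ))
              ∘ₗ map (LinearMap.id : B →ₗ[k] B) (Coalgebra.comul : B →ₗ[k] B ⊗[k] B))
            ∘ₗ (Coalgebra.comul : B →ₗ[k] B ⊗[k] B) := by
              rw [show map d ((auxW k H B d ∘ₗ map δ (auxV k H B δ))
                    ∘ₗ (Coalgebra.comul : B →ₗ[k] B ⊗[k] B))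
                  = map d (auxW k H B d ∘ₗ map δ (auxV k H B δ))
                    ∘ₗ map (LinearMap.id : B →ₗ[k] B) (Coalgebra.comul : B →ₗ[k] B ⊗[k] B)
                from by rw [← map_comp, LinearMap.comp_id]]
        _ = auxGR k H B δ d
            ∘ₗ map (LinearMap.id : B →ₗ[k] B) (Coalgebra.comul : B →ₗ[k] B ⊗[k] B)
            ∘ₗ (Coalgebra.comul : B →ₗ[k] B ⊗[k] B) := rfl
    rw [hL, hR]
    have hco : map (LinearMap.id : B →ₗ[k] B) (Coalgebra.comul : B →ₗ[k] B ⊗[k] B)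
          ∘ₗ (Coalgebra.comul : B →ₗ[k] B ⊗[k] B)
        = (TensorProduct.assoc k B B B).toLinearMap
          ∘ₗ map (Coalgebra.comul : B →ₗ[k] B ⊗[k] B) (LinearMap.id : B →ₗ[k] B)
          ∘ₗ (Coalgebra.comul : B →ₗ[k] B ⊗[k] B) := by
      have := (Coalgebra.coassoc (R := k) (A := B)).symm
      exact this
    rw [hco, ← auxKfinal k H B δ d]
    rfl
  · -- counit
    calc (TensorProduct.lid k B).toLinearMap
        ∘ₗ map (Coalgebra.counit : H →ₗ[k] k) LinearMap.id ∘ₗ DLind k H B δ d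
        = ((TensorProduct.lid k B).toLinearMap
            ∘ₗ map (Coalgebra.counit : H →ₗ[k] k) LinearMap.id
            ∘ₗ map (LinearMap.mul' k H) (LinearMap.id : B →ₗ[k] B)
            ∘ₗ (TensorProduct.assoc k H H B).symm.toLinearMap)
          ∘ₗ map d δ ∘ₗ (Coalgebra.comul : B →ₗ[k] B ⊗[k] B) := rfl
      _ = ((TensorProduct.lid k B).toLinearMap
            ∘ₗ map (Coalgebra.counit : H →ₗ[k] k)
                ((TensorProduct.lid k B).toLinearMap
                  ∘ₗ map (Coalgebra.counit : H →ₗ[k] k) (LinearMap.id : B →ₗ[k] B)))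
          ∘ₗ map d δ ∘ₗ (Coalgebra.comul : B →ₗ[k] B ⊗[k] B) := by rw [auxKc1]
      _ = (TensorProduct.lid k B).toLinearMap
          ∘ₗ map ((Coalgebra.counit : H →ₗ[k] k) ∘ₗ d)
              (((TensorProduct.lid k B).toLinearMap
                ∘ₗ map (Coalgebra.counit : H →ₗ[k] k) (LinearMap.id : B →ₗ[k] B)) ∘ₗ δ)
          ∘ₗ (Coalgebra.comul : B →ₗ[k] B ⊗[k] B) := by rw [map_comp]; rfl
      _ = (TensorProduct.lid k B).toLinearMap
          ∘ₗ map (Coalgebra.counit : B →ₗ[k] k) (LinearMap.id : B →ₗ[k] B)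
          ∘ₗ (Coalgebra.comul : B →ₗ[k] B ⊗[k] B) := by
            rw [hd_counit, show ((TensorProduct.lid k B).toLinearMap
                ∘ₗ map (Coalgebra.counit : H →ₗ[k] k) (LinearMap.id : B →ₗ[k] B)) ∘ₗ δ
              = LinearMap.id from hδ_counit]
      _ = LinearMap.id := by
            ext b
            rw [show (map (Coalgebra.counit : B →ₗ[k] k) (LinearMap.id : B →ₗ[k] B))
                = (Coalgebra.counit : B →ₗ[k] k).rTensor B from rfl]
            simp [Coalgebra.rTensor_counit_comul]


end
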